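/- The function v₂ is an actual solution at infinity: Let q ∈ ℂ with 0 < |q| < 1 and let a₁, a₂, b₁ ∈ ℂ* with qa₂/a₁ ∉ {q^{−m} : m ≥ 0}. Define v₂(x) = (θ_q(a₂x)/θ_q(x)) · ∑_{n≥0} (qa₂/b₁;q)_n (b₁/(a₁a₂x))^n / ((qa₂/a₁;q)_n (q;q)_n). Then for every x ∈ ℂ with |x| > |b₁/(a₁a₂q²)| and x ∉ −q^ℤ: (b₁/q² − a₁a₂x)·v₂(q²x) − (1/q − (a₁+a₂)x)·v₂(qx) − x·v₂(x) = 0. -/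

import Mathlib

open scoped BigOperators

/-- The finite q-Pochhammer symbol `(a;q)_n` for `n : ℕ`. -/
noncomputable def qPochN (q a : ℂ) (n : ℕ) : ℂ :=
  ∏ k ∈ Finset.range n, (1 - a * q ^ k)

/-- The infinite q-Pochhammer symbol `(a;q)_∞`. -/
noncomputable def qPochInf (q a : ℂ) : ℂ :=
  ∏' k : ℕ, (1 - a * q ^ k)

/-- The bilateral q-Pochhammer symbol `(a;q)_n` for `n : ℤ`. -/
noncomputable def qPochZ (q a : ℂ) (n : ℤ) : ℂ :=
  if 0 ≤ n then ∏ k ∈ Finset.range n.toNat, (1 - a * q ^ k)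
  else (∏ k ∈ Finset.range (-n).toNat, (1 - a * q ^ (-((k : ℤ) + 1))))⁻¹

/-- The Jacobi theta function `θ_q(x) = ∑_{n ∈ ℤ} q^{n(n-1)/2} x^n`. -/
noncomputable def theta (q x : ℂ) : ℂ :=
  ∑' n : ℤ, q ^ (n * (n - 1) / 2) * x ^ n


/-- The unilateral solution around infinity. -/
noncomputable def vSol (q a₁ a₂ b₁ x : ℂ) : ℂ :=
  (theta q (a₁ * x) / theta q x) *
    ∑' n : ℕ, qPochN q (q * a₁ / b₁) n * (b₁ / (a₁ * a₂ * x)) ^ n /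
      (qPochN q (q * a₁ / a₂) n * qPochN q q n)

/-!
Write `v₂(x) = θ_q(a₂x)/θ_q(x) · F(b₁/(a₁a₂x))` with `F(t) = ∑ cₙ tⁿ` and
`cₙ = (A;q)ₙ / ((B;q)ₙ (q;q)ₙ)`, `A = qa₂/b₁`, `B = qa₂/a₁`. Since `θ_q(qx) = x⁻¹ θ_q(x)`, each
q-shift of `x` multiplies the theta quotient by `a₂⁻¹`. The coefficients satisfy
`c_{n+1} (1 - Bqⁿ)(1 - q^{n+1}) = cₙ (1 - Aqⁿ)`, and comparing coefficients turns this into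
`q(1 - t) F(t) - (q + B - Aqt) F(qt) + B F(q²t) = 0`, valid wherever the three series converge,
i.e. for `|t| < 1` by the ratio test. Substituting `t = b₁/(a₁a₂q²x)` gives the equation.
-/

open Filter Topology

section Theta

variable {q x : ℂ}

theorem theta_q_mul (hq : q ≠ 0) (hx : x ≠ 0) : theta q (q * x) = x⁻¹ * theta q x := by
  unfold theta
  conv_rhs => rw [← tsum_mul_left, ← (Equiv.addRight (1 : ℤ)).tsum_eq]
  refine tsum_congr fun n => ?_
  have hexp : (n + 1) * (n + 1 - 1) / 2 = n * (n - 1) / 2 + n := by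
    rw [show (n + 1) * (n + 1 - 1) = n * (n - 1) + n * 2 by ring,
      Int.add_mul_ediv_right _ _ two_ne_zero]
  rw [Equiv.coe_addRight, hexp, zpow_add₀ hq, zpow_add_one₀ hx, mul_zpow]
  field_simp

theorem theta_div_theta_q_mul (a : ℂ) (hq : q ≠ 0) (ha : a ≠ 0) (hx : x ≠ 0) :
    theta q (a * (q * x)) / theta q (q * x) = a⁻¹ * (theta q (a * x) / theta q x) := by
  rw [mul_left_comm, theta_q_mul hq (mul_ne_zero ha hx), theta_q_mul hq hx, mul_div_mul_comm,
    mul_inv, mul_div_cancel_right₀ _ (inv_ne_zero hx)]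

end Theta

theorem summable_of_succ_eq_smul_of_tendsto {𝕜 E : Type*} [NormedField 𝕜] [NormedAddCommGroup E]
    [NormedSpace 𝕜 E] [CompleteSpace E] {f : ℕ → E} {ρ : ℕ → 𝕜} {L : 𝕜}
    (hf : ∀ n, f (n + 1) = ρ n • f n) (hρ : Tendsto ρ atTop (𝓝 L)) (hL : ‖L‖ < 1) :
    Summable f := by
  obtain ⟨r, hLr, hr⟩ := exists_between hL
  refine summable_of_ratio_norm_eventually_le hr ?_
  filter_upwards [hρ.norm.eventually (eventually_lt_nhds hLr)] with n hn
  rw [hf, norm_smul]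
  exact mul_le_mul_of_nonneg_right hn.le (norm_nonneg _)

/-- The coefficients of the basic hypergeometric series `₂φ₁(A, 0; B; q, t)`. -/
noncomputable def phiCoeff (q A B : ℂ) (n : ℕ) : ℂ :=
  qPochN q A n / (qPochN q B n * qPochN q q n)

section PhiCoeff

variable {q : ℂ} (A B : ℂ)

theorem phiCoeff_succ (n : ℕ) :
    phiCoeff q A B (n + 1) =
      phiCoeff q A B n * ((1 - A * q ^ n) / ((1 - B * q ^ n) * (1 - q * q ^ n))) := by
  simp only [phiCoeff, qPochN, Finset.prod_range_succ, div_eq_mul_inv, mul_inv]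
  ring

theorem phiCoeff_succ_mul {n : ℕ} (hB : 1 - B * q ^ n ≠ 0) (hq : 1 - q * q ^ n ≠ 0) :
    phiCoeff q A B (n + 1) * ((1 - B * q ^ n) * (1 - q * q ^ n)) =
      phiCoeff q A B n * (1 - A * q ^ n) := by
  rw [phiCoeff_succ, mul_assoc, div_mul_cancel₀ _ (mul_ne_zero hB hq)]

theorem summable_phiCoeff_mul_pow (hq : ‖q‖ < 1) {t : ℂ} (ht : ‖t‖ < 1) :
    Summable fun n => phiCoeff q A B n * t ^ n := by
  have hqn : Tendsto (fun n : ℕ => q ^ n) atTop (𝓝 0) :=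
    tendsto_pow_atTop_nhds_zero_of_norm_lt_one hq
  have hratio : Tendsto (fun n : ℕ => (1 - A * q ^ n) / ((1 - B * q ^ n) * (1 - q * q ^ n)) * t)
      atTop (𝓝 ((1 - A * 0) / ((1 - B * 0) * (1 - q * 0)) * t)) := by
    refine (Tendsto.div ?_ ?_ (by simp)).mul_const t
    · exact tendsto_const_nhds.sub (hqn.const_mul A)
    · exact (tendsto_const_nhds.sub (hqn.const_mul B)).mul
        (tendsto_const_nhds.sub (hqn.const_mul q))
  refine summable_of_succ_eq_smul_of_tendsto (fun n => ?_) hratio (by simpa using ht)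
  rw [phiCoeff_succ, smul_eq_mul, pow_succ]
  ring

end PhiCoeff

theorem qDifference_eq_zero_of_recurrence {q A B t F₀ F₁ F₂ : ℂ} {c : ℕ → ℂ}
    (hc : ∀ n, c (n + 1) * ((1 - B * q ^ n) * (1 - q * q ^ n)) = c n * (1 - A * q ^ n))
    (h₀ : HasSum (fun n => c n * t ^ n) F₀) (h₁ : HasSum (fun n => c n * (q * t) ^ n) F₁)
    (h₂ : HasSum (fun n => c n * (q ^ 2 * t) ^ n) F₂) :
    q * (1 - t) * F₀ - (q + B - A * q * t) * F₁ + B * F₂ = 0 := by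
  set d : ℕ → ℂ := fun n =>
    q * (c n * t ^ n) - (q + B) * (c n * (q * t) ^ n) + B * (c n * (q ^ 2 * t) ^ n)
  have hd : HasSum d (q * F₀ - (q + B) * F₁ + B * F₂) :=
    ((h₀.mul_left q).sub (h₁.mul_left _)).add (h₂.mul_left B)
  have he : HasSum (fun n => q * (c n * t ^ n) - A * q * (c n * (q * t) ^ n))
      (q * F₀ - A * q * F₁) :=
    (h₀.mul_left q).sub (h₁.mul_left _)
  -- `d (n + 1) = q t^{n+1} c_{n+1} (1 - Bqⁿ)(1 - q^{n+1})`: the recurrence makes it `t` times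
  -- the `n`-th term of `he`
  have hshift : HasSum (fun n => d (n + 1)) (t * (q * F₀ - A * q * F₁)) := by
    refine (he.mul_left t).congr_fun fun n => ?_
    linear_combination (q * t ^ (n + 1)) * hc n
  have hd' := (hasSum_nat_add_iff 1).mp hshift
  have hd0 : d 0 = 0 := by simp only [d]; ring
  rw [Finset.sum_range_one, hd0, add_zero] at hd'
  linear_combination hd.unique hd'

noncomputable def phiSeries (q A B t : ℂ) : ℂ :=
  ∑' n : ℕ, phiCoeff q A B n * t ^ n

theorem phiSeries_qDifference {q A B t : ℂ} (hq : ‖q‖ < 1) (hB : ∀ n : ℕ, 1 - B * q ^ n ≠ 0)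
    (ht : ‖t‖ < 1) :
    q * (1 - t) * phiSeries q A B t - (q + B - A * q * t) * phiSeries q A B (q * t)
      + B * phiSeries q A B (q ^ 2 * t) = 0 := by
  have hqt : ∀ k : ℕ, ‖q ^ k * t‖ < 1 := fun k => by
    rw [norm_mul, norm_pow]
    exact (mul_le_of_le_one_left (norm_nonneg _) (pow_le_one₀ (norm_nonneg _) hq.le)).trans_lt ht
  have hsum : ∀ k : ℕ, HasSum (fun n => phiCoeff q A B n * (q ^ k * t) ^ n)
      (phiSeries q A B (q ^ k * t)) := fun k =>
    (summable_phiCoeff_mul_pow A B hq (hqt k)).hasSum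
  have hqn : ∀ n : ℕ, 1 - q * q ^ n ≠ 0 := fun n h =>
    (pow_lt_one₀ (norm_nonneg q) hq n.succ_ne_zero).ne <| by
      rw [← norm_pow, pow_succ', ← sub_eq_zero.mp h, norm_one]
  exact qDifference_eq_zero_of_recurrence (fun n => phiCoeff_succ_mul A B (hB n) (hqn n))
    (by simpa using hsum 0) (by simpa using hsum 1) (hsum 2)

theorem vSol_eq_phiSeries (q a₁ a₂ b₁ x : ℂ) :
    vSol q a₁ a₂ b₁ x = theta q (a₁ * x) / theta q x *
      phiSeries q (q * a₁ / b₁) (q * a₁ / a₂) (b₁ / (a₁ * a₂ * x)) := by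
  unfold vSol phiSeries phiCoeff
  congr 1
  exact tsum_congr fun n => (div_mul_eq_mul_div _ _ _).symm

/-- `v₂` (i.e. `vSol` with `a₁` and `a₂` interchanged) is an actual solution of the
q-difference equation near infinity. -/
theorem v2_solution_at_infinity (q a₁ a₂ b₁ : ℂ)
    (hq0 : 0 < ‖q‖) (hq1 : ‖q‖ < 1)
    (ha₁ : a₁ ≠ 0) (ha₂ : a₂ ≠ 0) (hb₁ : b₁ ≠ 0)
    (haa : ∀ m : ℕ, q * a₂ / a₁ ≠ q ^ (-(m : ℤ))) :
    ∀ x : ℂ, ‖b₁ / (a₁ * a₂ * q ^ 2)‖ < ‖x‖ → (∀ k : ℤ, x ≠ -q ^ k) →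
      (b₁ / q ^ 2 - a₁ * a₂ * x) * vSol q a₂ a₁ b₁ (q ^ 2 * x)
        - (1 / q - (a₁ + a₂) * x) * vSol q a₂ a₁ b₁ (q * x)
        - x * vSol q a₂ a₁ b₁ x = 0 := by
  intro x hx _
  have hq : q ≠ 0 := norm_pos_iff.mp hq0
  have hx0 : x ≠ 0 := norm_pos_iff.mp ((norm_nonneg _).trans_lt hx)
  have hB : ∀ n : ℕ, 1 - q * a₂ / a₁ * q ^ n ≠ 0 := fun n h => haa n <| by
    rw [zpow_neg, zpow_natCast]
    exact eq_inv_of_mul_eq_one_left (by linear_combination -h)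
  set t := b₁ / (a₂ * a₁ * (q ^ 2 * x)) with ht_def
  have ht : ‖t‖ < 1 := by
    rw [show t = b₁ / (a₁ * a₂ * q ^ 2) / x by ring, norm_div, div_lt_one (norm_pos_iff.mpr hx0)]
    exact hx
  have hF := phiSeries_qDifference (A := q * a₂ / b₁) hq1 hB ht
  rw [vSol_eq_phiSeries, vSol_eq_phiSeries, vSol_eq_phiSeries, ← ht_def,
    show b₁ / (a₂ * a₁ * (q * x)) = q * t by rw [ht_def]; field_simp,
    show b₁ / (a₂ * a₁ * x) = q ^ 2 * t by rw [ht_def]; field_simp,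
    show q ^ 2 * x = q * (q * x) by ring, theta_div_theta_q_mul _ hq ha₂ (mul_ne_zero hq hx0),
    theta_div_theta_q_mul _ hq ha₂ hx0]
  linear_combination (norm := skip) (-x * (theta q (a₂ * x) / theta q x) * a₁ / (q * a₂)) * hF
  rw [ht_def]
  field_simp
  ring
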